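/- For a piecewise constant signal f : ℤ → ℝ with finite jump set S where jumps are separated by more than k, the support of T_k f is exactly the union over jumps i ∈ S of the index windows { i - k + 1, …, i }, and these windows are pairwise disjoint. -/

import Mathlib

/-!
The operator is the `k`-th forward difference, and `Δᵏ f = Δᵏ⁻¹ (Δ f)` where `Δ f` is supported
exactly on the jump set. The value `Δᵏ⁻¹ g m` is a combination of `g m, …, g (m + k - 1)` with
nonzero coefficients `± C(k - 1, ℓ)`; since jumps are more than `k` apart, at most one of these
values is nonzero, so there is no cancellation and `Δᵏ⁻¹ (Δ f) m ≠ 0` exactly when the window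
`[m, m + k - 1]` contains a jump.
-/

open Finset Function

theorem sum_range_neg_one_pow_mul_choose_eq_fwdDiff_iter {R : Type*} [Ring R] (k : ℕ)
    (f : ℤ → R) (m : ℤ) :
    ∑ j ∈ range (k + 1), (-1 : R) ^ (j + k) * (k.choose j : R) * f (m + j) =
      (fwdDiff 1)^[k] f m := by
  rw [fwdDiff_iter_eq_sum_shift]
  refine sum_congr rfl fun j hj => ?_
  have hjk : j + k = (k - j) + 2 * j := by have := mem_range.mp hj; omega
  rw [hjk, pow_add, pow_mul, neg_one_sq, one_pow, mul_one, zsmul_eq_mul, nsmul_one]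
  push_cast
  rfl

theorem support_fwdDiff_one {G : Type*} [AddCommGroup G] (f : ℤ → G) :
    support (fwdDiff 1 f) = {j | f (j + 1) ≠ f j} := by
  ext j
  simp [fwdDiff, sub_eq_zero]

theorem support_fwdDiff_iter_of_pairwise_lt_abs_sub {G : Type*} [AddCommGroup G]
    [IsAddTorsionFree G] {n : ℕ} {g : ℤ → G}
    (hsep : (support g).Pairwise fun i j => (n : ℤ) < |i - j|) :
    support ((fwdDiff 1)^[n] g) = ⋃ i ∈ support g, Set.Icc (i - n) i := by
  ext m
  simp only [mem_support, Set.mem_iUnion, Set.mem_Icc, fwdDiff_iter_eq_sum_shift, nsmul_one]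
  constructor
  · intro hm
    obtain ⟨ℓ, hℓ, hgℓ⟩ := exists_ne_zero_of_sum_ne_zero hm
    have hℓn := mem_range.mp hℓ
    exact ⟨m + ℓ, right_ne_zero_of_smul hgℓ, by omega, by omega⟩
  · rintro ⟨i, hi, hmi, him⟩
    obtain ⟨ℓ, rfl⟩ : ∃ ℓ : ℕ, i = m + ℓ := ⟨(i - m).toNat, by omega⟩
    have hℓn : ℓ ≤ n := by omega
    -- by separation, `i` is the only point of `support g` in `[m, m + n]`
    rw [sum_eq_single_of_mem ℓ (mem_range.mpr (by omega))]
    · exact smul_ne_zero (mul_ne_zero (pow_ne_zero _ (by norm_num))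
        (Nat.cast_ne_zero.mpr (Nat.choose_pos hℓn).ne')) hi
    · intro b hb hbℓ
      have hbn := mem_range.mp hb
      by_contra hgb
      have : (n : ℤ) < |m + ℓ - (m + b)| := hsep hi (right_ne_zero_of_smul hgb) (by omega)
      rw [lt_abs] at this
      omega

theorem pairwiseDisjoint_Ioc_sub_of_pairwise_le_abs_sub {α : Type*} [AddCommGroup α]
    [LinearOrder α] [IsOrderedAddMonoid α] {S : Set α} {k : α}
    (hsep : S.Pairwise fun i j => k ≤ |i - j|) :
    S.PairwiseDisjoint fun i => Set.Ioc (i - k) i := by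
  intro i hi j hj hij
  refine Set.disjoint_left.mpr fun x hxi hxj => (hsep hi hj hij).not_gt ?_
  rw [Set.mem_Ioc] at hxi hxj
  exact abs_sub_lt_iff.mpr
    ⟨sub_lt_comm.mp (hxi.1.trans_le hxj.2), sub_lt_comm.mp (hxj.1.trans_le hxi.2)⟩

theorem piecewise_constant_support_general (k : ℕ) (hk : 0 < k) (f : ℤ → ℝ)
    (hsep : ∀ j₁ ∈ {j : ℤ | f (j + 1) ≠ f j}, ∀ j₂ ∈ {j : ℤ | f (j + 1) ≠ f j},
      j₁ ≠ j₂ → (k : ℤ) < |j₁ - j₂|) :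
    (Function.support
        (fun m : ℤ =>
          ∑ j ∈ Finset.range (k + 1), (-1 : ℝ) ^ (j + k) * (k.choose j : ℝ) * f (m + j))
      = ⋃ i ∈ {j : ℤ | f (j + 1) ≠ f j}, Set.Ioc (i - (k : ℤ)) i) ∧
    {j : ℤ | f (j + 1) ≠ f j}.PairwiseDisjoint (fun i => Set.Ioc (i - (k : ℤ)) i) := by
  refine ⟨?_, pairwiseDisjoint_Ioc_sub_of_pairwise_le_abs_sub fun i hi j hj hij =>
    (hsep i hi j hj hij).le⟩
  obtain ⟨n, rfl⟩ := Nat.exists_eq_add_one_of_ne_zero hk.ne'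
  have hsep' : (support (fwdDiff 1 f)).Pairwise fun i j => (n : ℤ) < |i - j| := by
    rw [support_fwdDiff_one]
    exact fun i hi j hj hij => by have := hsep i hi j hj hij; push_cast at this; omega
  rw [funext (sum_range_neg_one_pow_mul_choose_eq_fwdDiff_iter (n + 1) f), iterate_succ_apply,
    support_fwdDiff_iter_of_pairwise_lt_abs_sub hsep', support_fwdDiff_one]
  refine Set.iUnion₂_congr fun i _ => ?_
  ext m
  simp only [Set.mem_Icc, Set.mem_Ioc]
  push_cast
  omega

theorem piecewise_constant_support (k : ℕ) (hk : 0 < k) (f : ℤ → ℝ)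
    (hS : {j : ℤ | f (j + 1) ≠ f j}.Finite)
    (hsep : ∀ j₁ ∈ {j : ℤ | f (j + 1) ≠ f j}, ∀ j₂ ∈ {j : ℤ | f (j + 1) ≠ f j},
      j₁ ≠ j₂ → (k : ℤ) < |j₁ - j₂|) :
    (Function.support
        (fun m : ℤ =>
          ∑ j ∈ Finset.range (k + 1), (-1 : ℝ) ^ (j + k) * (k.choose j : ℝ) * f (m + j))
      = ⋃ i ∈ {j : ℤ | f (j + 1) ≠ f j}, Set.Ioc (i - (k : ℤ)) i) ∧
    {j : ℤ | f (j + 1) ≠ f j}.PairwiseDisjoint (fun i => Set.Ioc (i - (k : ℤ)) i) :=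
  piecewise_constant_support_general k hk f hsep
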